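/- If 0 < x_0 < x_1 < ... < x_{N-1} are positive reals and γ_0 < γ_1 < ... < γ_{N-1} are nonnegative integers, then the generalized Vandermonde matrix with entries x_j^{γ_i} has positive determinant; in particular it is invertible. -/

import Mathlib

/-!
A vanishing determinant gives a nonzero coefficient vector `c` with `∑ i, c i * t ^ γ i = 0` at
the `N` distinct points `x j`. By Descartes' rule of signs a nonzero polynomial with at most `N`
monomials has fewer than `N` positive roots, so the determinant never vanishes on the convex set
of increasing positive nodes. It is therefore of constant sign there, and at the nodes `2 ^ j` the
matrix is the ordinary Vandermonde matrix on the increasing nodes `2 ^ γ i`, whose determinant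
`∏ i < j, (2 ^ γ j - 2 ^ γ i)` is positive.
-/

open Finset Polynomial

namespace Polynomial

theorem signVariations_lt_card_support {R : Type*} [Semiring R] [LinearOrder R] {P : R[X]}
    (hP : P ≠ 0) : P.signVariations < #P.support := by
  induction hn : #P.support using Nat.strong_induction_on generalizing P with
  | _ n ih =>
    by_cases hE : P.eraseLead = 0
    · have hmon : P = monomial P.natDegree P.leadingCoeff := by
        simpa [hE] using (eraseLead_add_monomial_natDegree_leadingCoeff P).symm
      rw [hmon, signVariations_monomial, ← hn]
      exact card_pos.2 (nonempty_support_iff.2 hP)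
    · have hlt := ih _ (hn ▸ eraseLead_support_card_lt hP) hE rfl
      have hle := signVariations_le_eraseLead_succ P
      have hcard := card_support_eraseLead_add_one hP
      omega

variable {R : Type*} [CommRing R] [LinearOrder R] [IsStrictOrderedRing R]

theorem card_le_signVariations {P : R[X]} (hP : P ≠ 0) {s : Finset R}
    (hs : ∀ x ∈ s, 0 < x ∧ P.IsRoot x) : #s ≤ P.signVariations := by
  refine le_trans ?_ P.roots_countP_pos_le_signVariations
  rw [Multiset.countP_eq_card_filter]
  refine Multiset.card_le_card ((Multiset.le_iff_subset s.nodup).2 fun x hx => ?_)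
  obtain ⟨hx0, hroot⟩ := hs x hx
  exact Multiset.mem_filter.2 ⟨(mem_roots hP).2 hroot, hx0⟩

theorem card_pos_roots_lt_card_support {P : R[X]} (hP : P ≠ 0) {s : Finset R}
    (hs : ∀ x ∈ s, 0 < x ∧ P.IsRoot x) : #s < #P.support :=
  (card_le_signVariations hP hs).trans_lt (signVariations_lt_card_support hP)

theorem support_sum_monomial_subset {ι S : Type*} [Semiring S] (s : Finset ι)
    (γ : ι → ℕ) (c : ι → S) : (∑ i ∈ s, monomial (γ i) (c i)).support ⊆ s.image γ := by
  intro n hn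
  by_contra hnot
  refine mem_support_iff.1 hn ?_
  rw [finsetSum_coeff]
  refine sum_eq_zero fun i hi => ?_
  rw [coeff_monomial, if_neg]
  exact fun h => hnot (h ▸ mem_image_of_mem γ hi)

theorem sum_monomial_ne_zero {ι S : Type*} [Fintype ι] [Semiring S] {γ : ι → ℕ}
    (hγ : Function.Injective γ) {c : ι → S} (hc : c ≠ 0) : ∑ i, monomial (γ i) (c i) ≠ 0 := by
  obtain ⟨i, hi⟩ := Function.ne_iff.1 hc
  refine ne_of_apply_ne (coeff · (γ i)) ?_
  rw [finsetSum_coeff,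
    sum_eq_single i (fun j _ hji => coeff_monomial_of_ne _ (hγ.ne hji.symm)) (by simp),
    coeff_monomial_same, coeff_zero]
  exact hi

end Polynomial

theorem IsPreconnected.pos_of_forall_ne_zero {X α : Type*} [TopologicalSpace X] [Zero α]
    [LinearOrder α] [TopologicalSpace α] [OrderClosedTopology α] {S : Set X}
    (hS : IsPreconnected S) {f : X → α} (hf : ContinuousOn f S) (hne : ∀ x ∈ S, f x ≠ 0)
    {a b : X} (ha : a ∈ S) (hfa : 0 < f a) (hb : b ∈ S) : 0 < f b := by
  by_contra! hfb
  obtain ⟨c, hc, hfc⟩ := hS.intermediate_value hb ha hf ⟨hfb, hfa.le⟩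
  exact hne c hc hfc

theorem convex_setOf_strictMono {ι : Type*} [Preorder ι] :
    Convex ℝ {x : ι → ℝ | StrictMono x} := by
  intro x hx y hy a b ha hb hab i j hij
  simp only [Pi.add_apply, Pi.smul_apply, smul_eq_mul]
  rcases ha.eq_or_lt with rfl | ha
  · rw [zero_add] at hab
    simpa [hab] using hy hij
  · linarith [mul_lt_mul_of_pos_left (hx hij) ha, mul_le_mul_of_nonneg_left (hy hij).le hb]

namespace Matrix

def genVandermonde {ι κ R : Type*} [CommSemiring R] (γ : ι → ℕ) (x : κ → R) : Matrix ι κ R :=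
  of fun i j => x j ^ γ i

theorem genVandermonde_pow {n : ℕ} {R : Type*} [CommRing R] (γ : Fin n → ℕ) (a : R) :
    genVandermonde γ (fun j : Fin n => a ^ (j : ℕ)) = vandermonde fun i => a ^ γ i := by
  ext i j
  exact pow_right_comm a j (γ i)

theorem continuous_det_genVandermonde {n : Type*} [Fintype n] [DecidableEq n] (γ : n → ℕ) :
    Continuous fun x : n → ℝ => (genVandermonde γ x).det :=
  Continuous.matrix_det <| continuous_pi fun _ => continuous_pi fun j => (continuous_apply j).pow _

variable {R : Type*} [CommRing R] [LinearOrder R] [IsStrictOrderedRing R]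

theorem det_vandermonde_pos {n : ℕ} {v : Fin n → R} (hv : StrictMono v) :
    0 < (vandermonde v).det := by
  rw [det_vandermonde]
  exact prod_pos fun i _ => prod_pos fun j hj => sub_pos.2 (hv (mem_Ioi.1 hj))

theorem det_genVandermonde_ne_zero {ι : Type*} [Fintype ι] [DecidableEq ι] {γ : ι → ℕ}
    (hγ : Function.Injective γ) {x : ι → R} (hx : Function.Injective x) (hpos : ∀ j, 0 < x j) :
    (genVandermonde γ x).det ≠ 0 := by
  intro hdet
  obtain ⟨c, hc, hcx⟩ := exists_vecMul_eq_zero_iff.2 hdet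
  have hroots : ∀ y ∈ univ.image x, 0 < y ∧ (∑ i, monomial (γ i) (c i)).IsRoot y := by
    simp only [mem_image, mem_univ, true_and, forall_exists_index, forall_apply_eq_imp_iff]
    refine fun j => ⟨hpos j, ?_⟩
    simpa [IsRoot, eval_finsetSum, vecMul, dotProduct, genVandermonde] using congrFun hcx j
  have hlt := (card_pos_roots_lt_card_support (sum_monomial_ne_zero hγ hc) hroots).trans_le
    (card_le_card (support_sum_monomial_subset _ _ _))
  rw [card_image_of_injective _ hx] at hlt
  exact (hlt.trans_le card_image_le).false

end Matrix

theorem stmt_5 (N : ℕ) (x : Fin N → ℝ) (hx : StrictMono x) (hpos : ∀ j, 0 < x j)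
    (γ : Fin N → ℕ) (hγ : StrictMono γ) :
    0 < (Matrix.of fun i j : Fin N => x j ^ γ i).det := by
  let S := {y : Fin N → ℝ | StrictMono y} ∩ Set.pi Set.univ fun _ => Set.Ioi 0
  have hS : IsPreconnected S :=
    (convex_setOf_strictMono.inter (convex_pi fun _ _ => convex_Ioi 0)).isPreconnected
  have hdyadic : (fun j : Fin N => (2 : ℝ) ^ (j : ℕ)) ∈ S :=
    ⟨fun _ _ hij => pow_lt_pow_right₀ one_lt_two hij, fun _ _ => Set.mem_Ioi.2 (by positivity)⟩
  refine hS.pos_of_forall_ne_zero (Matrix.continuous_det_genVandermonde γ).continuousOn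
    (fun y hy => Matrix.det_genVandermonde_ne_zero hγ.injective hy.1.injective (hy.2 · trivial))
    hdyadic ?_ ⟨hx, fun j _ => hpos j⟩
  rw [Matrix.genVandermonde_pow]
  exact Matrix.det_vandermonde_pos fun _ _ hij => pow_lt_pow_right₀ one_lt_two (hγ hij)
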